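/- For positive integers c, m, n₁ with n₁ | cm, and integers l, n₂, one has the identity Σ_{0 ≤ d < c, (d,c)=1} e(ld/c) S(md, n₂; mc n₁^{-1}) = Σ_{u (mod mc n₁^{-1}), u ū ≡ 1 (mod mc n₁^{-1})} S(0, l + u n₁; c) e(n₂ ū / (mc n₁^{-1})), where S(0, a; c) = Σ_{d (mod c), (d,c)=1} e(ad/c) is the Ramanujan sum. Consequently, since the Ramanujan sum S(0,a;c) is bounded by (a,c), the left-hand side is O(m c^{1+ε}). -/

import Mathlib

noncomputable section

open Complex Real MeasureTheory

/-- `e(z) = e^{2πiz}`. -/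
def e2pi (z : ℂ) : ℂ := Complex.exp (2 * (Real.pi : ℂ) * Complex.I * z)

/-- The classical Kloosterman sum `S(a, b; c) = Σ_{d d̄ ≡ 1 (mod c)} e((d a + d̄ b)/c)`
(symmetric in `a, b`). -/
def kloos (a b : ℤ) (c : ℕ) : ℂ :=
  if h : c = 0 then 0 else
    haveI : NeZero c := ⟨h⟩
    ∑ d : (ZMod c)ˣ,
      e2pi (((a : ℂ) * (((d : ZMod c).val : ℕ) : ℂ) +
        (b : ℂ) * ((((d⁻¹ : (ZMod c)ˣ) : ZMod c).val : ℕ) : ℂ)) / (c : ℂ))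

/-- The Ramanujan sum `S(0, a; c) = Σ_{(d,c)=1} e(a d / c)`. -/
def ramanujanSum (a : ℤ) (c : ℕ) : ℂ :=
  if h : c = 0 then 0 else
    haveI : NeZero c := ⟨h⟩
    ∑ d : (ZMod c)ˣ, e2pi ((a : ℂ) * (((d : ZMod c).val : ℕ) : ℂ) / (c : ℂ))

/-- Integral over the vertical line `Re s = σ` (with `ds = i dτ`). -/
def VLine (g : ℂ → ℂ) (σ : ℝ) : ℂ := ∫ τ : ℝ, g (σ + τ * Complex.I) * Complex.I

/-- Abstract data of an even Hecke-Maass cusp form of type `1/2 + i t` for `SL(2,ℤ)`: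
its spectral parameter `t`, its normalized Fourier(-Hecke) coefficients `a(n)`, and the
entire `L`-function continuing the Dirichlet series `L(s) = Σ_{n ≥ 1} a(n) n^{-s}`. -/
structure EvenMaassForm where
  t : ℝ
  a : ℕ → ℂ
  L : ℂ → ℂ
  L_entire : Differentiable ℂ L
  L_eq : ∀ s : ℂ, 3/2 < s.re → L s = ∑' n : ℕ+, a (n : ℕ) * ((n : ℕ) : ℂ) ^ (-s)

/-- Abstract data of a Hecke-Maass cusp form of type `(ν₁, ν₂)` for `SL(3,ℤ)`:
its Fourier-Whittaker coefficients `A(m,n)` normalized by `A(1,1) = 1`, the entire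
`L`-function `L(s,f)` continuing `Σ A(1,m) m^{-s}`, and the `L`-function `L(s,f̃)` of the dual
form (whose coefficients are `A(n,m)`), continuing `Σ A(m,1) m^{-s}`. -/
structure MaassFormSL3 where
  ν₁ : ℂ
  ν₂ : ℂ
  A : ℕ → ℕ → ℂ
  A_norm : A 1 1 = 1
  L : ℂ → ℂ
  Ldual : ℂ → ℂ
  L_entire : Differentiable ℂ L
  Ldual_entire : Differentiable ℂ Ldual
  L_eq : ∀ s : ℂ, 2 < s.re → L s = ∑' m : ℕ+, A 1 (m : ℕ) * ((m : ℕ) : ℂ) ^ (-s)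
  Ldual_eq : ∀ s : ℂ, 2 < s.re → Ldual s = ∑' m : ℕ+, A (m : ℕ) 1 * ((m : ℕ) : ℂ) ^ (-s)

/-- Langlands parameter `α = -ν₁ - 2ν₂ + 1`. -/
def MaassFormSL3.α (f : MaassFormSL3) : ℂ := -f.ν₁ - 2 * f.ν₂ + 1

/-- Langlands parameter `β = -ν₁ + ν₂`. -/
def MaassFormSL3.β (f : MaassFormSL3) : ℂ := -f.ν₁ + f.ν₂

/-- Langlands parameter `γ = 2ν₁ + ν₂ - 1`. -/
def MaassFormSL3.γ (f : MaassFormSL3) : ℂ := 2 * f.ν₁ + f.ν₂ - 1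

/-- `Lfu` is the (entire) Rankin-Selberg `L`-function `L(s, f × u)`, i.e. the analytic
continuation of `Σ_{m,n ≥ 1} conj(a(n)) A(m,n) (m²n)^{-s}`. -/
def IsRankinSelberg (f : MaassFormSL3) (u : EvenMaassForm) (Lfu : ℂ → ℂ) : Prop :=
  Differentiable ℂ Lfu ∧ ∀ s : ℂ, 2 < s.re →
    Lfu s = ∑' (m : ℕ+) (n : ℕ+),
      (starRingEnd ℂ) (u.a (n : ℕ)) * f.A (m : ℕ) (n : ℕ) *
        ((((m : ℕ) : ℂ)) ^ 2 * (((n : ℕ) : ℂ))) ^ (-s)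

/-- `G(u) = (cos (π u / A))^{-A}`. -/
def Gweight (A : ℕ) (u : ℂ) : ℂ := (Complex.cos ((Real.pi : ℂ) * u / (A : ℂ))) ^ (-(A : ℤ))

/-- `F(u) = (cos (π u / A))^{-3A}`. -/
def Fweight (A : ℕ) (u : ℂ) : ℂ := (Complex.cos ((Real.pi : ℂ) * u / (A : ℂ))) ^ (-(3 * A : ℤ))

/-- The `GL(2)` gamma factor `γ(u,t) = π^{-u} Γ((u+it)/2) Γ((u-it)/2)`. -/
def gammaGL2 (u : ℂ) (t : ℝ) : ℂ :=
  (Real.pi : ℂ) ^ (-u) * Complex.Gamma ((u + Complex.I * t) / 2) *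
    Complex.Gamma ((u - Complex.I * t) / 2)

/-- The weight `U(y,t)` in the `GL(2)` approximate functional equation:
`U(y,t) = (1/2πi) ∫_{(1/2)} y^{-u} G(u) (γ(1/2+u,t)/γ(1/2,t)) du/u`. -/
def Ufun (A : ℕ) (y : ℝ) (t : ℝ) : ℂ :=
  (1 / (2 * (Real.pi : ℂ) * Complex.I)) *
    VLine (fun u => (y : ℂ) ^ (-u) * Gweight A u *
      (gammaGL2 (1/2 + u) t / gammaGL2 (1/2) t) / u) (1/2)

/-- The six-fold `GL(3) × GL(2)` gamma factor
`π^{-3s} Γ((s-it-α)/2) Γ((s-it-β)/2) Γ((s-it-γ)/2) Γ((s+it-α)/2) Γ((s+it-β)/2) Γ((s+it-γ)/2)`. -/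
def gammaRS (α β γ : ℂ) (s : ℂ) (t : ℝ) : ℂ :=
  (Real.pi : ℂ) ^ (-3 * s) *
    Complex.Gamma ((s - Complex.I * t - α) / 2) * Complex.Gamma ((s - Complex.I * t - β) / 2) *
    Complex.Gamma ((s - Complex.I * t - γ) / 2) * Complex.Gamma ((s + Complex.I * t - α) / 2) *
    Complex.Gamma ((s + Complex.I * t - β) / 2) * Complex.Gamma ((s + Complex.I * t - γ) / 2)

/-- The weight `V₁(y,t) = (1/2πi) ∫_{(3)} y^{-u} F(u) (γ₁(1/2+u,t)/γ₁(1/2,t)) du/u`. -/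
def V1 (A : ℕ) (α β γ : ℂ) (y : ℝ) (t : ℝ) : ℂ :=
  (1 / (2 * (Real.pi : ℂ) * Complex.I)) *
    VLine (fun u => (y : ℂ) ^ (-u) * Fweight A u *
      (gammaRS α β γ (1/2 + u) t / gammaRS α β γ (1/2) t) / u) 3

/-- The weight `V₂(y,t) = (1/2πi) ∫_{(3)} y^{-u} F(u) (γ₂(1/2+u,t)/γ₁(1/2,t)) du/u`. -/
def V2 (A : ℕ) (α β γ : ℂ) (y : ℝ) (t : ℝ) : ℂ :=
  (1 / (2 * (Real.pi : ℂ) * Complex.I)) *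
    VLine (fun u => (y : ℂ) ^ (-u) * Fweight A u *
      (gammaRS (-α) (-β) (-γ) (1/2 + u) t / gammaRS α β γ (1/2) t) / u) 3

/-- The gamma kernel in the `GL(3)` Voronoi formula. -/
def voronoiKernel (α β γ : ℂ) (k : ℕ) (s : ℂ) : ℂ :=
  (Complex.Gamma ((1 + s + 2 * k + α) / 2) * Complex.Gamma ((1 + s + 2 * k + β) / 2) *
      Complex.Gamma ((1 + s + 2 * k + γ) / 2)) /
    (Complex.Gamma ((-s - α) / 2) * Complex.Gamma ((-s - β) / 2) *
      Complex.Gamma ((-s - γ) / 2))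

/-- `Φ_k(x) = ∫_{Re s = σ} (π³x)^{-s} (gamma kernel) φ̃(-s-k) ds`. -/
def PhiK (φ : ℝ → ℂ) (α β γ : ℂ) (k : ℕ) (σ : ℝ) (x : ℝ) : ℂ :=
  VLine (fun s => ((Real.pi : ℂ) ^ 3 * (x : ℂ)) ^ (-s) * voronoiKernel α β γ k s *
    mellin φ (-s - k)) σ

/-- The Eisenstein coefficient `η(n, s) = Σ_{ad = n} (a/d)^{s - 1/2}`. -/
def etaCoef (n : ℕ) (s : ℂ) : ℂ :=
  ∑ a ∈ n.divisors, ((a : ℂ) / ((n / a : ℕ) : ℂ)) ^ (s - 1/2)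

/-- The kernel `G₀(s)` in the proof of the `GL(3)` Voronoi asymptotics. -/
def G0kernel (α β γ : ℂ) (s : ℂ) : ℂ :=
  (Complex.Gamma (s + α / 2) * Complex.Gamma (s + β / 2) * Complex.Gamma (s + γ / 2)) /
    (Complex.Gamma (1/2 - s - α / 2) * Complex.Gamma (1/2 - s - β / 2) *
      Complex.Gamma (1/2 - s - γ / 2))

/-- `ψ₀(x) = 2π³ x ∫_{(σ')} (π³x)^{-2s} G₀(s) ψ̃(-2s+1) ds`. -/
def psi0 (ψ : ℝ → ℂ) (α β γ : ℂ) (σ' : ℝ) (x : ℝ) : ℂ :=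
  2 * (Real.pi : ℂ) ^ 3 * (x : ℂ) *
    VLine (fun s => ((Real.pi : ℂ) ^ 3 * (x : ℂ)) ^ (-2 * s) * G0kernel α β γ s *
      mellin ψ (-2 * s + 1)) σ'


/-!
Expanding the Kloosterman sum and exchanging the two summations turns the `d`-sum into a
Ramanujan sum: with `q = mc/n₁` we have `q n₁ = m c`, so the phase `m d u / q` equals
`u n₁ d / c`.

For the bound, writing the coprimality condition as `Σ_{t ∣ (x, c)} μ(t)` gives
`S(0, a; c) = Σ_{t ∣ c} μ(t) (c/t) [c/t ∣ a]`, hence `|S(0, a; c)| ≤ Σ_{d ∣ c, d ∣ a} d`.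
For fixed `d ∣ c` the `u < q` with `d ∣ l + u n₁` lie in one residue class modulo
`d / (d, n₁)`, so `d` times their number is at most `(d, n₁) q + d ≤ m c + c`. Summing over
`d ∣ c` bounds the sum by `2 τ(c) m c`, and `τ(c) ≪_ε c^ε`.
-/

open ArithmeticFunction Finset
open scoped ArithmeticFunction.Moebius

theorem e2pi_add (x y : ℂ) : e2pi (x + y) = e2pi x * e2pi y := by
  rw [e2pi, e2pi, e2pi, ← Complex.exp_add]
  ring_nf

theorem e2pi_natCast_mul (n : ℕ) (x : ℂ) : e2pi (n * x) = e2pi x ^ n := by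
  rw [e2pi, e2pi, ← Complex.exp_nat_mul]
  ring_nf

theorem e2pi_intCast (k : ℤ) : e2pi k = 1 := by
  simpa [e2pi, mul_comm, mul_left_comm] using Complex.exp_int_mul_two_pi_mul_I k

theorem norm_e2pi_of_im_eq_zero {z : ℂ} (hz : z.im = 0) : ‖e2pi z‖ = 1 := by
  rw [e2pi, Complex.norm_exp]
  simp [hz]

theorem e2pi_intCast_div_eq_one_iff {k : ℕ} (hk : k ≠ 0) (a : ℤ) :
    e2pi (a / k) = 1 ↔ (k : ℤ) ∣ a := by
  have hk' : (k : ℂ) ≠ 0 := Nat.cast_ne_zero.mpr hk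
  constructor
  · intro h
    obtain ⟨n, hn⟩ := Complex.exp_eq_one_iff.mp h
    refine ⟨n, ?_⟩
    have : (a : ℂ) = k * n := by
      field_simp at hn
      linear_combination hn
    exact_mod_cast this
  · rintro ⟨b, rfl⟩
    rw [show ((k * b : ℤ) : ℂ) / k = (b : ℂ) by push_cast; field_simp, e2pi_intCast]

theorem sum_range_e2pi {k : ℕ} (hk : k ≠ 0) (a : ℤ) :
    ∑ x ∈ range k, e2pi (a * x / k) = if (k : ℤ) ∣ a then (k : ℂ) else 0 := by
  set ζ := e2pi (a / k)
  have hpow : ∀ x : ℕ, e2pi (a * x / k) = ζ ^ x := fun x => by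
    rw [← e2pi_natCast_mul]
    ring_nf
  simp_rw [hpow]
  split_ifs with hdvd
  · simp [ζ, (e2pi_intCast_div_eq_one_iff hk a).mpr hdvd]
  · have hζ : ζ ≠ 1 := mt (e2pi_intCast_div_eq_one_iff hk a).mp hdvd
    have hζk : ζ ^ k = 1 := by
      rw [← e2pi_natCast_mul, mul_div_cancel₀ _ (Nat.cast_ne_zero.mpr hk), e2pi_intCast]
    rw [geom_sum_eq hζ, hζk, sub_self, zero_div]

theorem sum_units_zmod_eq_sum_coprime {c : ℕ} [NeZero c] {M : Type*} [AddCommMonoid M]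
    (f : ℕ → M) :
    ∑ u : (ZMod c)ˣ, f (u : ZMod c).val = ∑ d ∈ range c with d.Coprime c, f d := by
  refine Finset.sum_bij (fun u _ => (u : ZMod c).val) (fun u _ => ?_) (fun u _ v _ h => ?_)
    (fun d hd => ?_) (fun _ _ => rfl)
  · simpa using ⟨ZMod.val_lt _, ZMod.val_coe_unit_coprime u⟩
  · exact Units.ext (ZMod.val_injective c h)
  · simp only [mem_filter, mem_range] at hd
    exact ⟨ZMod.unitOfCoprime d hd.2, mem_univ _, by simp [ZMod.val_cast_of_lt hd.1]⟩

theorem sum_filter_dvd_range_mul {M : Type*} [AddCommMonoid M] {t : ℕ} (ht : t ≠ 0) (k : ℕ)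
    (f : ℕ → M) :
    ∑ x ∈ range (t * k) with t ∣ x, f x = ∑ y ∈ range k, f (t * y) := by
  refine Finset.sum_nbij' (· / t) (t * ·) (fun x hx => ?_) (fun y hy => ?_)
    (fun x hx => ?_) (fun y _ => ?_) (fun x hx => ?_)
  all_goals simp only [mem_filter, mem_range] at *
  · exact Nat.div_lt_of_lt_mul hx.1
  · exact ⟨Nat.mul_lt_mul_left (Nat.pos_of_ne_zero ht) |>.mpr hy, dvd_mul_right t y⟩
  · exact Nat.mul_div_cancel' hx.2
  · exact Nat.mul_div_cancel_left y (Nat.pos_of_ne_zero ht)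
  · rw [Nat.mul_div_cancel' hx.2]

theorem sum_divisors_moebius (n : ℕ) :
    ∑ t ∈ n.divisors, (μ t : ℂ) = if n = 1 then 1 else 0 := by
  have h := congrArg (· n) (coe_moebius_mul_coe_zeta (R := ℂ))
  simp only [coe_mul_zeta_apply, intCoe_apply, one_apply] at h
  exact h

theorem ite_coprime_eq_sum_moebius {c : ℕ} (hc : c ≠ 0) (x : ℕ) :
    (if x.Coprime c then (1 : ℂ) else 0) = ∑ t ∈ c.divisors with t ∣ x, (μ t : ℂ) := by
  have hgcd : (x.gcd c).divisors = {t ∈ c.divisors | t ∣ x} := by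
    ext t
    simp only [Nat.mem_divisors, mem_filter, Nat.dvd_gcd_iff, ne_eq, Nat.gcd_eq_zero_iff, hc,
      and_false, not_false_eq_true, and_true]
    tauto
  rw [← hgcd, sum_divisors_moebius]

theorem sum_range_filter_dvd_e2pi {c t : ℕ} (hc : c ≠ 0) (htc : t ∣ c) (a : ℤ) :
    ∑ x ∈ range c with t ∣ x, e2pi (a * x / c) =
      if ((c / t : ℕ) : ℤ) ∣ a then ((c / t : ℕ) : ℂ) else 0 := by
  obtain ⟨k, rfl⟩ := htc
  have ht : t ≠ 0 := left_ne_zero_of_mul hc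
  have hk : k ≠ 0 := right_ne_zero_of_mul hc
  rw [Nat.mul_div_cancel_left k (Nat.pos_of_ne_zero ht), sum_filter_dvd_range_mul ht,
    ← sum_range_e2pi hk]
  refine sum_congr rfl fun y _ => congrArg e2pi ?_
  have : (t : ℂ) ≠ 0 := Nat.cast_ne_zero.mpr ht
  push_cast
  field_simp

theorem ramanujanSum_eq_sum_moebius {c : ℕ} (hc : c ≠ 0) (a : ℤ) :
    ramanujanSum a c =
      ∑ t ∈ c.divisors, (μ t : ℂ) * if ((c / t : ℕ) : ℤ) ∣ a then ((c / t : ℕ) : ℂ) else 0 := by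
  have : NeZero c := ⟨hc⟩
  rw [ramanujanSum, dif_neg hc, sum_units_zmod_eq_sum_coprime (fun x => e2pi (a * x / c)),
    sum_filter]
  calc ∑ x ∈ range c, (if x.Coprime c then e2pi ((a : ℂ) * x / c) else 0)
      = ∑ x ∈ range c, ∑ t ∈ c.divisors with t ∣ x, (μ t : ℂ) * e2pi (a * x / c) := by
        refine sum_congr rfl fun x _ => ?_
        rw [← sum_mul, ← ite_coprime_eq_sum_moebius hc, ite_mul, one_mul, zero_mul]
    _ = ∑ t ∈ c.divisors, (μ t : ℂ) * ∑ x ∈ range c with t ∣ x, e2pi (a * x / c) := by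
        simp_rw [sum_filter, mul_sum, mul_ite, mul_zero]
        rw [sum_comm]
    _ = _ := by
        refine sum_congr rfl fun t ht => ?_
        rw [sum_range_filter_dvd_e2pi hc (Nat.dvd_of_mem_divisors ht)]

theorem norm_ramanujanSum_le {c : ℕ} (hc : c ≠ 0) (a : ℤ) :
    ‖ramanujanSum a c‖ ≤ ∑ d ∈ c.divisors with ((d : ℕ) : ℤ) ∣ a, (d : ℝ) := by
  rw [ramanujanSum_eq_sum_moebius hc, sum_filter,
    ← Nat.sum_div_divisors c fun d => if (d : ℤ) ∣ a then (d : ℝ) else 0]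
  refine (norm_sum_le _ _).trans (sum_le_sum fun t _ => ?_)
  rw [norm_mul, Complex.norm_intCast, apply_ite norm, norm_zero, Complex.norm_natCast]
  exact mul_le_of_le_one_left (by positivity) (mod_cast abs_moebius_le_one)

theorem sum_e2pi_mul_kloos_eq_sum_ramanujanSum {c m n₁ q : ℕ} [NeZero c] [NeZero q]
    (hqn : q * n₁ = m * c) (l n₂ : ℤ) :
    ∑ d ∈ range c with d.Coprime c, e2pi (l * d / c) * kloos (m * d) n₂ q =
      ∑ v : (ZMod q)ˣ, ramanujanSum (l + ((v : ZMod q).val : ℤ) * n₁) c *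
        e2pi (n₂ * ((((v⁻¹ : (ZMod q)ˣ) : ZMod q).val : ℂ) / q)) := by
  have hc : c ≠ 0 := NeZero.ne c
  have hq : q ≠ 0 := NeZero.ne q
  simp_rw [ramanujanSum, dif_neg hc, sum_mul, kloos, dif_neg hq, mul_sum]
  rw [← sum_units_zmod_eq_sum_coprime]
  conv_rhs => rw [sum_comm]
  refine sum_congr rfl fun w _ => sum_congr rfl fun u _ => ?_
  rw [← e2pi_add, ← e2pi_add]
  congr 1
  set W : ℂ := ((w : ZMod c).val : ℂ)
  set U : ℂ := ((u : ZMod q).val : ℂ)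
  have hphase : (m : ℂ) * W * U / q = U * n₁ * W / c := by
    have hqnC : (q : ℂ) * n₁ = m * c := mod_cast hqn
    rw [div_eq_div_iff (Nat.cast_ne_zero.mpr hq) (Nat.cast_ne_zero.mpr hc)]
    linear_combination -(W * U) * hqnC
  push_cast
  linear_combination hphase

theorem card_filter_range_dvd_add_mul_le {d : ℕ} (hd : d ≠ 0) (q n : ℕ) (l : ℤ) :
    #{u ∈ range q | (d : ℤ) ∣ l + (u : ℕ) * n} ≤ q / (d / d.gcd n) + 1 := by
  rcases eq_empty_or_nonempty {u ∈ range q | (d : ℤ) ∣ l + (u : ℕ) * n} with h | ⟨u₀, hu₀⟩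
  · simp [h]
  have hpos : 0 < d / d.gcd n :=
    Nat.div_pos (Nat.gcd_le_left n (Nat.pos_of_ne_zero hd)) (Nat.gcd_pos_of_pos_left n
      (Nat.pos_of_ne_zero hd))
  have hsub : {u ∈ range q | (d : ℤ) ∣ l + (u : ℕ) * n} ⊆
      {u ∈ range q | u ≡ u₀ [MOD d / d.gcd n]} := by
    intro u hu
    simp only [mem_filter] at hu hu₀ ⊢
    refine ⟨hu.1, ?_⟩
    have hmul : (u : ℤ) * n ≡ u₀ * n [ZMOD d] :=
      Int.ModEq.add_left_cancel' l <|
        (Int.modEq_zero_iff_dvd.mpr hu.2).trans (Int.modEq_zero_iff_dvd.mpr hu₀.2).symm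
    have := Int.ModEq.cancel_right_div_gcd (by positivity) hmul
    rw [Int.gcd_natCast_natCast, ← Int.natCast_div] at this
    exact Int.natCast_modEq_iff.mp this
  calc #{u ∈ range q | (d : ℤ) ∣ l + (u : ℕ) * n}
      ≤ #{u ∈ range q | u ≡ u₀ [MOD d / d.gcd n]} := card_le_card hsub
    _ = Nat.count (· ≡ u₀ [MOD d / d.gcd n]) q := (Nat.count_eq_card_filter_range _ _).symm
    _ ≤ q / (d / d.gcd n) + 1 := by
        rw [Nat.count_modEq_card _ hpos]
        split_ifs <;> omega

theorem mul_card_filter_range_dvd_add_mul_le {d : ℕ} (hd : d ≠ 0) (q n : ℕ) (l : ℤ) :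
    d * #{u ∈ range q | (d : ℤ) ∣ l + (u : ℕ) * n} ≤ d.gcd n * q + d := by
  obtain ⟨d', hd'⟩ : d.gcd n ∣ d := Nat.gcd_dvd_left d n
  have hg : 0 < d.gcd n := Nat.gcd_pos_of_pos_left n (Nat.pos_of_ne_zero hd)
  have hdiv : d / d.gcd n = d' := Nat.div_eq_of_eq_mul_left hg (by rw [mul_comm, ← hd'])
  calc d * #{u ∈ range q | (d : ℤ) ∣ l + (u : ℕ) * n}
      ≤ d * (q / d' + 1) := by
        rw [← hdiv]
        exact Nat.mul_le_mul_left d (card_filter_range_dvd_add_mul_le hd q n l)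
    _ = d.gcd n * d' * (q / d') + d := by
        rw [← hd']
        ring
    _ ≤ d.gcd n * q + d := by
        rw [mul_assoc]
        gcongr
        exact Nat.mul_div_le q d'

section DivisorBound

variable {ε : ℝ}

theorem natCast_add_one_le_mul_two_rpow (hε : 0 < ε) (a : ℕ) :
    (a + 1 : ℝ) ≤ (1 + 1 / (ε * Real.log 2)) * 2 ^ (a * ε) := by
  have hlog : 0 < ε * Real.log 2 := mul_pos hε (Real.log_pos one_lt_two)
  have hexp : 1 + a * (ε * Real.log 2) ≤ (2 : ℝ) ^ (a * ε) := by
    rw [Real.rpow_def_of_pos two_pos]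
    linarith [Real.add_one_le_exp (Real.log 2 * (a * ε))]
  have hone : 1 ≤ (2 : ℝ) ^ (a * ε) := Real.one_le_rpow one_le_two (by positivity)
  have ha : (a : ℝ) ≤ 2 ^ (a * ε) / (ε * Real.log 2) := by
    rw [le_div_iff₀ hlog]
    linarith
  rw [add_mul, one_mul, div_mul_eq_mul_div, one_mul]
  linarith

theorem natCast_add_one_le_prime_pow_rpow (hε : 0 < ε) {p : ℕ} (hp : p.Prime) (a : ℕ) :
    (a + 1 : ℝ) ≤ (1 + 1 / (ε * Real.log 2)) * ((p : ℝ) ^ a) ^ ε ∧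
      (2 ≤ (p : ℝ) ^ ε → (a + 1 : ℝ) ≤ ((p : ℝ) ^ a) ^ ε) := by
  have hp2 : (2 : ℝ) ≤ p := mod_cast hp.two_le
  have hp0 : (0 : ℝ) ≤ p := by positivity
  constructor
  · calc (a + 1 : ℝ) ≤ (1 + 1 / (ε * Real.log 2)) * 2 ^ (a * ε) :=
          natCast_add_one_le_mul_two_rpow hε a
      _ ≤ (1 + 1 / (ε * Real.log 2)) * ((p : ℝ) ^ a) ^ ε := by
          rw [← Real.rpow_natCast, ← Real.rpow_mul hp0]
          gcongr
  · intro hpε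
    calc (a + 1 : ℝ) ≤ 2 ^ a := mod_cast Nat.lt_two_pow_self
      _ ≤ ((p : ℝ) ^ ε) ^ a := by gcongr
      _ = ((p : ℝ) ^ a) ^ ε := by
          rw [← Real.rpow_natCast, ← Real.rpow_natCast, ← Real.rpow_mul hp0,
            ← Real.rpow_mul hp0, mul_comm]

theorem exists_card_divisors_le_rpow (hε : 0 < ε) :
    ∃ C > 0, ∀ n : ℕ, n ≠ 0 → (#n.divisors : ℝ) ≤ C * (n : ℝ) ^ ε := by
  set K : ℝ := 1 + 1 / (ε * Real.log 2)
  have hK : 1 ≤ K := le_add_of_nonneg_right (by positivity)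
  set N : ℕ := ⌈(2 : ℝ) ^ (1 / ε)⌉₊
  refine ⟨K ^ N, by positivity, fun n hn => ?_⟩
  -- Primes `p ≥ N ≥ 2 ^ (1 / ε)` have `p ^ ε ≥ 2`; only the primes below `N` cost a factor `K`.
  have hlocal : ∀ p ∈ n.primeFactors, ((n.factorization p + 1 : ℕ) : ℝ) ≤
      (if p ∈ range N then K else 1) * ((p : ℝ) ^ n.factorization p) ^ ε := by
    intro p hp
    obtain ⟨hbig, hlarge⟩ :=
      natCast_add_one_le_prime_pow_rpow hε (Nat.prime_of_mem_primeFactors hp) (n.factorization p)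
    push_cast
    split_ifs with hpN
    · exact hbig
    · rw [one_mul]
      refine hlarge ?_
      calc (2 : ℝ) = ((2 : ℝ) ^ (1 / ε)) ^ ε := by
            rw [← Real.rpow_mul zero_le_two, one_div_mul_cancel hε.ne', Real.rpow_one]
        _ ≤ (p : ℝ) ^ ε := by
            gcongr
            exact (Nat.le_ceil _).trans (mod_cast not_lt.mp (mem_range.not.mp hpN))
  have hn_eq : ∏ p ∈ n.primeFactors, ((p : ℝ) ^ n.factorization p) ^ ε = (n : ℝ) ^ ε := by
    rw [Real.finsetProd_rpow _ _ (fun p _ => by positivity)]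
    congr 1
    exact_mod_cast (Nat.prod_factorization_eq_prod_primeFactors _).symm.trans
      (Nat.prod_factorization_pow_eq_self hn)
  calc (#n.divisors : ℝ) = ∏ p ∈ n.primeFactors, ((n.factorization p + 1 : ℕ) : ℝ) := by
        rw [Nat.card_divisors hn]
        push_cast
        rfl
    _ ≤ ∏ p ∈ n.primeFactors,
          (if p ∈ range N then K else 1) * ((p : ℝ) ^ n.factorization p) ^ ε :=
        prod_le_prod (fun _ _ => by positivity) hlocal
    _ = K ^ #(n.primeFactors ∩ range N) * (n : ℝ) ^ ε := by
        rw [prod_mul_distrib, prod_ite_mem, prod_const, hn_eq]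
    _ ≤ K ^ N * (n : ℝ) ^ ε := by
        gcongr
        exact (card_le_card inter_subset_right).trans (card_range N).le

end DivisorBound

theorem sum_norm_ramanujanSum_le {c q n : ℕ} [NeZero q] (hc : c ≠ 0) (hn : n ≠ 0) (l : ℤ) :
    ∑ v : (ZMod q)ˣ, ‖ramanujanSum (l + ((v : ZMod q).val : ℤ) * n) c‖ ≤
      #c.divisors * (n * q + c : ℝ) := by
  calc ∑ v : (ZMod q)ˣ, ‖ramanujanSum (l + ((v : ZMod q).val : ℤ) * n) c‖
      ≤ ∑ u ∈ range q, ∑ d ∈ c.divisors with ((d : ℕ) : ℤ) ∣ l + (u : ℕ) * n, (d : ℝ) := by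
        rw [sum_units_zmod_eq_sum_coprime fun u => ‖ramanujanSum (l + (u : ℤ) * n) c‖]
        exact (sum_le_sum fun u _ => norm_ramanujanSum_le hc _).trans
          (sum_le_sum_of_subset_of_nonneg (filter_subset _ _) fun _ _ _ => by positivity)
    _ = ∑ d ∈ c.divisors, ((d * #{u ∈ range q | (d : ℤ) ∣ l + (u : ℕ) * n} : ℕ) : ℝ) := by
        simp_rw [sum_filter]
        rw [sum_comm]
        refine sum_congr rfl fun d _ => ?_
        rw [← sum_filter, sum_const, nsmul_eq_mul, mul_comm]
        push_cast
        rfl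
    _ ≤ ∑ d ∈ c.divisors, (n * q + c : ℝ) := by
        refine sum_le_sum fun d hd => ?_
        obtain ⟨hdc, -⟩ := Nat.mem_divisors.mp hd
        have hd0 : d ≠ 0 := ne_zero_of_dvd_ne_zero hc hdc
        have hgcd : d.gcd n ≤ n := Nat.gcd_le_right _ (Nat.pos_of_ne_zero hn)
        have hdle : d ≤ c := Nat.le_of_dvd (Nat.pos_of_ne_zero hc) hdc
        have := mul_card_filter_range_dvd_add_mul_le hd0 q n l
        exact_mod_cast this.trans (by gcongr)
    _ = #c.divisors * (n * q + c : ℝ) := by rw [sum_const, nsmul_eq_mul]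

/-- **a character sum identity and its bound.** For positive integers
`c, m, n₁` with `n₁ | cm` and integers `l, n₂`:
`Σ_{0 ≤ d < c, (d,c)=1} e(ld/c) S(md, n₂; mc/n₁)
  = Σ_{u ū ≡ 1 (mod mc/n₁)} S(0, l + u n₁; c) e(n₂ ū / (mc/n₁))`,
and consequently (since the Ramanujan sum `S(0,a;c)` is bounded by `(a,c)`), the left-hand
side is `O(m c^{1+ε})`. -/
theorem statement19 :
    (∀ (c m n₁ : ℕ+) (l n₂ : ℤ) (hdvd : (n₁ : ℕ) ∣ (m : ℕ) * (c : ℕ)),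
      haveI : NeZero ((m : ℕ) * (c : ℕ) / (n₁ : ℕ)) :=
        ⟨(Nat.div_pos (Nat.le_of_dvd (Nat.mul_pos m.pos c.pos) hdvd) n₁.pos).ne'⟩
      (∑ d ∈ Finset.filter (fun d => Nat.Coprime d c) (Finset.range c),
          e2pi ((l : ℂ) * (d : ℂ) / ((c : ℕ) : ℂ)) *
            kloos ((m : ℤ) * (d : ℤ)) n₂ ((m : ℕ) * (c : ℕ) / (n₁ : ℕ)))
        = ∑ v : (ZMod ((m : ℕ) * (c : ℕ) / (n₁ : ℕ)))ˣ,
            ramanujanSum (l + (((v : ZMod ((m : ℕ) * (c : ℕ) / (n₁ : ℕ))).val : ℕ) : ℤ) *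
              ((n₁ : ℕ) : ℤ)) (c : ℕ) *
              e2pi ((n₂ : ℂ) *
                ((((v⁻¹ : (ZMod ((m : ℕ) * (c : ℕ) / (n₁ : ℕ)))ˣ) :
                    ZMod ((m : ℕ) * (c : ℕ) / (n₁ : ℕ))).val : ℂ) /
                  (((m : ℕ) * (c : ℕ) / (n₁ : ℕ) : ℕ) : ℂ)))) ∧
    (∀ ε > (0 : ℝ), ∃ C > (0 : ℝ), ∀ (c m n₁ : ℕ+) (l n₂ : ℤ),
      (n₁ : ℕ) ∣ (m : ℕ) * (c : ℕ) →
      ‖∑ d ∈ Finset.filter (fun d => Nat.Coprime d c) (Finset.range c),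
          e2pi ((l : ℂ) * (d : ℂ) / ((c : ℕ) : ℂ)) *
            kloos ((m : ℤ) * (d : ℤ)) n₂ ((m : ℕ) * (c : ℕ) / (n₁ : ℕ))‖
        ≤ C * (m : ℝ) * ((c : ℕ) : ℝ) ^ (1 + ε)) := by
  have hq (c m n₁ : ℕ+) (hdvd : (n₁ : ℕ) ∣ m * c) : NeZero ((m : ℕ) * c / n₁) :=
    ⟨(Nat.div_ne_zero_iff_of_dvd hdvd).mpr ⟨by positivity, n₁.ne_zero⟩⟩
  refine ⟨fun c m n₁ l n₂ hdvd => have := hq c m n₁ hdvd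
    sum_e2pi_mul_kloos_eq_sum_ramanujanSum (Nat.div_mul_cancel hdvd) l n₂, fun ε hε => ?_⟩
  obtain ⟨D, hD, hτ⟩ := exists_card_divisors_le_rpow hε
  refine ⟨2 * D, by positivity, fun c m n₁ l n₂ hdvd => ?_⟩
  have := hq c m n₁ hdvd
  set q := (m : ℕ) * (c : ℕ) / (n₁ : ℕ)
  have hqn : (n₁ : ℕ) * q = m * c := Nat.mul_div_cancel' hdvd
  have hc : (1 : ℝ) ≤ (c : ℕ) := mod_cast c.pos
  have hm : (1 : ℝ) ≤ (m : ℕ) := mod_cast m.pos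
  rw [sum_e2pi_mul_kloos_eq_sum_ramanujanSum (Nat.div_mul_cancel hdvd) l n₂]
  calc _ ≤ ∑ v : (ZMod q)ˣ, ‖ramanujanSum (l + ((v : ZMod q).val : ℤ) * (n₁ : ℕ)) c‖ := by
        refine (norm_sum_le _ _).trans_eq (sum_congr rfl fun v _ => ?_)
        rw [norm_mul, norm_e2pi_of_im_eq_zero (by simp [-ZMod.natCast_val]), mul_one]
    _ ≤ #(c : ℕ).divisors * ((n₁ : ℕ) * q + (c : ℕ) : ℝ) :=
        sum_norm_ramanujanSum_le c.ne_zero n₁.ne_zero l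
    _ ≤ D * ((c : ℕ) : ℝ) ^ ε * (2 * (m : ℕ) * (c : ℕ)) := by
        gcongr
        · exact hτ c c.ne_zero
        · rw [← Nat.cast_mul, hqn]
          push_cast
          nlinarith
    _ = 2 * D * (m : ℝ) * ((c : ℕ) : ℝ) ^ (1 + ε) := by
        rw [Real.rpow_add (by positivity), Real.rpow_one]
        ring

end
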